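/- Let f be holomorphic near z ∈ ℂ with f′(z) ≠ 0, and let M(ζ) = (aζ + b)/(cζ + d) be a Möbius transformation with ad − bc ≠ 0 such that M is finite and holomorphic at f(w) for w near z (i.e., c·f(w) + d ≠ 0 near z). Then for every n ≥ 0, Tamanoi's Schwarzian derivatives satisfy S_n[M∘f](z) = S_n[f](z). -/

import Mathlib

/-- The Möbius-normalized function `V(z,w) = N_z(f(z+w))` used by Tamanoi. -/
noncomputable def tamanoiV (f : ℂ → ℂ) (z w : ℂ) : ℂ :=
  deriv f z * (f (z + w) - f z) /
    ((1 / 2) * iteratedDeriv 2 f z * (f (z + w) - f z) + (deriv f z) ^ 2)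

/-- Tamanoi's Schwarzian derivative of virtual order `n`. -/
noncomputable def tamanoiS (f : ℂ → ℂ) (n : ℕ) (z : ℂ) : ℂ :=
  iteratedDeriv (n + 1) (tamanoiV f z) 0

/-!
`N_z` is the Möbius map with `N_z(f(z)) = 0` for which `N_z ∘ f` has derivative `1` and second
derivative `0` at `z`; hence the normalizer of `M ∘ f` is `N_z ∘ M⁻¹`, and `V` does not change.
Concretely, `V(z, w)` depends only on `f'(z)`, `f''(z)` and `f(z + w) - f(z)`, which transform
explicitly under `M`, and `N` is invariant under that substitution. So the two `V`'s agree near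
`w = 0`, and so do all their derivatives there.
-/

open Filter Topology

theorem moebius_sub_moebius {F : Type*} [Field F] {a b c d u v : F} (hu : c * u + d ≠ 0)
    (hv : c * v + d ≠ 0) :
    (a * u + b) / (c * u + d) - (a * v + b) / (c * v + d)
      = (a * d - b * c) * (u - v) / ((c * u + d) * (c * v + d)) := by
  rw [div_sub_div _ _ hu hv]
  ring

section Moebius

variable {𝕜 : Type*} [NontriviallyNormedField 𝕜] {f : 𝕜 → 𝕜} {a b c d : 𝕜}

theorem HasDerivAt.moebius_comp {f' y : 𝕜} (hf : HasDerivAt f f' y) (hD : c * f y + d ≠ 0) :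
    HasDerivAt (fun w => (a * f w + b) / (c * f w + d))
      ((a * d - b * c) * f' / (c * f y + d) ^ 2) y := by
  refine (((hf.const_mul a).add_const b).fun_div ((hf.const_mul c).add_const d) hD).congr_deriv
    ?_
  ring

theorem deriv_moebius_comp_eventuallyEq {z : 𝕜} (hf : ∀ᶠ y in 𝓝 z, DifferentiableAt 𝕜 f y)
    (hD : ∀ᶠ y in 𝓝 z, c * f y + d ≠ 0) :
    deriv (fun w => (a * f w + b) / (c * f w + d))
      =ᶠ[𝓝 z] fun y => (a * d - b * c) * deriv f y / (c * f y + d) ^ 2 := by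
  filter_upwards [hf, hD] with y hfy hDy
  exact (hfy.hasDerivAt.moebius_comp hDy).deriv

theorem iteratedDeriv_two_moebius_comp {z : 𝕜} (hf : ∀ᶠ y in 𝓝 z, DifferentiableAt 𝕜 f y)
    (hf2 : DifferentiableAt 𝕜 (deriv f) z) (hD : ∀ᶠ y in 𝓝 z, c * f y + d ≠ 0) :
    iteratedDeriv 2 (fun w => (a * f w + b) / (c * f w + d)) z
      = (a * d - b * c) * (iteratedDeriv 2 f z * (c * f z + d) - 2 * c * deriv f z ^ 2)
        / (c * f z + d) ^ 3 := by
  have hf1 : HasDerivAt (fun y => c * f y + d) (c * deriv f z) z :=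
    (hf.self_of_nhds.hasDerivAt.const_mul c).add_const d
  simp only [iteratedDeriv_succ', iteratedDeriv_zero]
  rw [(deriv_moebius_comp_eventuallyEq hf hD).deriv_eq,
    ((hf2.hasDerivAt.const_mul _).fun_div (hf1.fun_pow 2) (pow_ne_zero 2 hD.self_of_nhds)).deriv]
  field_simp [hD.self_of_nhds]
  ring

end Moebius

/-- Tamanoi's `N_z(t)` in terms of `p = f'(z)`, `q = f''(z)` and `s = t - f(z)`. -/
def tamanoiN {F : Type*} [Field F] (p q s : F) : F :=
  p * s / (1 / 2 * q * s + p ^ 2)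

theorem tamanoiN_moebius {F : Type*} [Field F] [NeZero (2 : F)] {K p q c d u v : F} (hK : K ≠ 0)
    (hu : c * u + d ≠ 0) (hv : c * v + d ≠ 0) :
    tamanoiN (K * p / (c * v + d) ^ 2) (K * (q * (c * v + d) - 2 * c * p ^ 2) / (c * v + d) ^ 3)
        (K * (u - v) / ((c * u + d) * (c * v + d)))
      = tamanoiN p q (u - v) := by
  have hden : 1 / 2 * (K * (q * (c * v + d) - 2 * c * p ^ 2) / (c * v + d) ^ 3)
          * (K * (u - v) / ((c * u + d) * (c * v + d))) + (K * p / (c * v + d) ^ 2) ^ 2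
      = K ^ 2 * (1 / 2 * q * (u - v) + p ^ 2) / ((c * v + d) ^ 3 * (c * u + d)) := by
    field_simp
    ring
  rw [tamanoiN, tamanoiN, hden, div_div_eq_mul_div]
  -- if the denominator of `N` vanishes, both sides are `0` because `x / 0 = 0`
  by_cases hX : 1 / 2 * q * (u - v) + p ^ 2 = 0
  · simp only [hX, mul_zero, div_zero]
  · field_simp

theorem tamanoiV_eq_tamanoiN (f : ℂ → ℂ) (z w : ℂ) :
    tamanoiV f z w = tamanoiN (deriv f z) (iteratedDeriv 2 f z) (f (z + w) - f z) :=
  rfl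

theorem tamanoiV_moebius_comp_eventuallyEq {f : ℂ → ℂ} {z a b c d : ℂ}
    (hf : AnalyticAt ℂ f z) (habcd : a * d - b * c ≠ 0) (hM : ∀ᶠ w in 𝓝 z, c * f w + d ≠ 0) :
    tamanoiV (fun w => (a * f w + b) / (c * f w + d)) z =ᶠ[𝓝 0] tamanoiV f z := by
  have hMz : c * f z + d ≠ 0 := hM.self_of_nhds
  have hg1 := (hf.differentiableAt.hasDerivAt.moebius_comp (a := a) (b := b) hMz).deriv
  have hg2 := iteratedDeriv_two_moebius_comp (a := a) (b := b)
    (hf.eventually_analyticAt.mono fun _ h => h.differentiableAt) hf.deriv.differentiableAt hM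
  have hM0 : ∀ᶠ w in 𝓝 0, c * f (z + w) + d ≠ 0 :=
    ((continuous_const_add z).tendsto' 0 z (add_zero z)).eventually hM
  filter_upwards [hM0] with w hw
  rw [tamanoiV_eq_tamanoiN, tamanoiV_eq_tamanoiN, hg1, hg2, moebius_sub_moebius hw hMz]
  exact tamanoiN_moebius habcd hw hMz

theorem tamanoiS_moebius_invariant_general (f : ℂ → ℂ) (z : ℂ)
    (hf : AnalyticAt ℂ f z)
    (a b c d : ℂ) (habcd : a * d - b * c ≠ 0)
    (hM : ∀ᶠ w in nhds z, c * f w + d ≠ 0) (n : ℕ) :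
    tamanoiS (fun w => (a * f w + b) / (c * f w + d)) n z = tamanoiS f n z :=
  (tamanoiV_moebius_comp_eventuallyEq hf habcd hM).iteratedDeriv_eq (n + 1)

/-- Möbius invariance of Tamanoi's Schwarzian derivatives:
`S_n[M∘f](z) = S_n[f](z)` for `M(ζ) = (aζ+b)/(cζ+d)` with `ad - bc ≠ 0`. -/
theorem tamanoiS_moebius_invariant (f : ℂ → ℂ) (z : ℂ)
    (hf : AnalyticAt ℂ f z) (hf' : deriv f z ≠ 0)
    (a b c d : ℂ) (habcd : a * d - b * c ≠ 0)
    (hM : ∀ᶠ w in nhds z, c * f w + d ≠ 0) (n : ℕ) :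
    tamanoiS (fun w => (a * f w + b) / (c * f w + d)) n z = tamanoiS f n z :=
  tamanoiS_moebius_invariant_general f z hf a b c d habcd hM n
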